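/- Let F be a field and B = F⟨t, x⟩/(t², x²). The elements {w^k, w^k t, w^k x, w^k t x : k ≥ 0}, where w = xt + tx, form an F-basis of B. In particular B is infinite-dimensional and w generates a polynomial subalgebra F[w] ⊆ B. -/

import Mathlib

/-!
The algebra `B = F⟨t,x⟩/(t², x²)`: quotient of the free noncommutative
algebra on two generators (`0 ↦ t`, `1 ↦ x`) by the two-sided ideal
generated by `t²` and `x²`.
-/

noncomputable section
open FreeAlgebra

variable (F : Type) [Field F]

inductive BRel (F : Type) [Field F] :
    FreeAlgebra F (Fin 2) → FreeAlgebra F (Fin 2) → Prop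
  | t2 : BRel F (ι F 0 * ι F 0) 0
  | x2 : BRel F (ι F 1 * ι F 1) 0

abbrev B (F : Type) [Field F] := RingQuot (BRel F)

def t : B F := RingQuot.mkAlgHom F (BRel F) (ι F 0)
def x : B F := RingQuot.mkAlgHom F (BRel F) (ι F 1)
/-- `w = xt + tx` -/
def w : B F := x F * t F + t F * x F

/-- the four "tails": `1, t, x, tx` -/
def tail : Fin 4 → B F := ![1, t F, x F, t F * x F]

/-- the claimed basis elements `w^k, w^k t, w^k x, w^k t x` -/
def bElt : ℕ × Fin 4 → B F := fun ⟨k, i⟩ => w F ^ k * tail F i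

/-!
Since `t² = x² = 0` and `t`, `x` commute with `w`, left multiplication by `t` and by `x` maps the
family `bElt` into its own span, by explicit formulas (`t_mul_bElt`, `x_mul_bElt`). Read as
operators `coordT`, `coordX` on the coordinate space `(ℕ × Fin 4) →₀ F`, where `single (k, i) 1`
stands for `w ^ k * tail i`, these formulas again square to zero, so they define a representation
of `B`. Applying it to the coordinate vector of `1` gives a linear map inverse to taking linear
combinations of `bElt`, so `bElt` is a basis. Its members `w ^ k` are then linearly independent.
-/

lemma Polynomial.aeval_injective_of_linearIndependent_pow {R A : Type*} [CommRing R] [Ring A]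
    [Algebra R A] {a : A} (h : LinearIndependent R (a ^ · : ℕ → A)) :
    Function.Injective (Polynomial.aeval a : Polynomial R →ₐ[R] A) := by
  rw [injective_iff_map_eq_zero]
  intro p hp
  refine (Polynomial.linearIndependent_powers_iff_aeval (LinearMap.mulLeft R a) 1).mp ?_ p ?_
  · simpa [LinearMap.pow_mulLeft] using h
  · change Polynomial.aeval (Algebra.lmul R A a) p 1 = 0
    rw [Polynomial.aeval_algHom_apply, hp, map_zero, LinearMap.zero_apply]

lemma t_mul_t : t F * t F = 0 := by
  rw [t, ← map_mul, RingQuot.mkAlgHom_rel F BRel.t2, map_zero]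

lemma x_mul_x : x F * x F = 0 := by
  rw [x, ← map_mul, RingQuot.mkAlgHom_rel F BRel.x2, map_zero]

lemma x_mul_t : x F * t F = w F - t F * x F := by
  rw [w, add_sub_cancel_right]

lemma x_mul_t_mul_x : x F * (t F * x F) = w F * x F := by
  rw [← mul_assoc, x_mul_t, sub_mul, mul_assoc, x_mul_x, mul_zero, sub_zero]

lemma commute_t_w : Commute (t F) (w F) := by
  simp only [Commute, SemiconjBy, w, mul_add, add_mul, ← mul_assoc, t_mul_t, zero_mul, add_zero]
  rw [mul_assoc, mul_assoc, t_mul_t, mul_zero, zero_add]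

lemma commute_x_w : Commute (x F) (w F) := by
  simp only [Commute, SemiconjBy, w, mul_add, add_mul, ← mul_assoc, x_mul_x, zero_mul, zero_add]
  rw [mul_assoc _ (x F) (x F), x_mul_x, mul_zero, add_zero]

abbrev Coords (F : Type) [Field F] := (ℕ × Fin 4) →₀ F

open Finsupp in
def coordT : Module.End F (Coords F) :=
  linearCombination F fun p => ![single (p.1, 1) 1, 0, single (p.1, 3) 1, 0] p.2

open Finsupp in
def coordX : Module.End F (Coords F) :=
  linearCombination F fun p =>
    ![single (p.1, 2) 1, single (p.1 + 1, 0) 1 - single (p.1, 3) 1, 0, single (p.1 + 1, 2) 1] p.2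

lemma coordT_mul_self : coordT F * coordT F = 0 := by
  refine Finsupp.basisSingleOne.ext fun ⟨k, i⟩ => ?_
  fin_cases i <;> simp [coordT]

lemma coordX_mul_self : coordX F * coordX F = 0 := by
  refine Finsupp.basisSingleOne.ext fun ⟨k, i⟩ => ?_
  fin_cases i <;> simp [coordX]

def coordRep : B F →ₐ[F] Module.End F (Coords F) :=
  RingQuot.liftAlgHom F ⟨FreeAlgebra.lift F ![coordT F, coordX F], by
    rintro _ _ (_ | _) <;> simp [coordT_mul_self, coordX_mul_self]⟩

lemma coordRep_t : coordRep F (t F) = coordT F := by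
  simp [t, coordRep, RingQuot.liftAlgHom_mkAlgHom_apply]

lemma coordRep_x : coordRep F (x F) = coordX F := by
  simp [x, coordRep, RingQuot.liftAlgHom_mkAlgHom_apply]

lemma coordRep_w_single (k : ℕ) (i : Fin 4) :
    coordRep F (w F) (Finsupp.single (k, i) 1) = Finsupp.single (k + 1, i) 1 := by
  fin_cases i <;> simp [w, coordRep_t, coordRep_x, coordT, coordX]

lemma coordRep_w_pow_single (n k : ℕ) (i : Fin 4) :
    (coordRep F (w F) ^ n) (Finsupp.single (k, i) 1) = Finsupp.single (k + n, i) 1 := by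
  induction n with
  | zero => simp
  | succ n ih => rw [pow_succ', Module.End.mul_apply, ih, coordRep_w_single, add_assoc]

def coords : B F →ₗ[F] Coords F :=
  LinearMap.applyₗ (Finsupp.single (0, 0) 1) ∘ₗ (coordRep F).toLinearMap

def ofCoords : Coords F →ₗ[F] B F := Finsupp.linearCombination F (bElt F)

lemma coords_bElt (p : ℕ × Fin 4) : coords F (bElt F p) = Finsupp.single p 1 := by
  obtain ⟨k, i⟩ := p
  have coords_tail :
      coordRep F (tail F i) (Finsupp.single (0, 0) 1) = Finsupp.single (0, i) 1 := by
    fin_cases i <;> simp [tail, coordRep_t, coordRep_x, coordT, coordX]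
  simp only [coords, bElt, LinearMap.coe_comp, Function.comp_apply, AlgHom.toLinearMap_apply,
    map_mul, map_pow, Module.End.mul_apply, LinearMap.applyₗ_apply_apply, coords_tail,
    coordRep_w_pow_single, zero_add]

lemma t_mul_bElt (k : ℕ) (i : Fin 4) :
    t F * bElt F (k, i) = ofCoords F (coordT F (Finsupp.single (k, i) 1)) := by
  simp only [bElt, (commute_t_w F).pow_right k |>.left_comm]
  fin_cases i <;> simp [ofCoords, coordT, bElt, tail, t_mul_t, ← mul_assoc]

lemma x_mul_bElt (k : ℕ) (i : Fin 4) :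
    x F * bElt F (k, i) = ofCoords F (coordX F (Finsupp.single (k, i) 1)) := by
  simp only [bElt, (commute_x_w F).pow_right k |>.left_comm]
  fin_cases i <;>
    simp [ofCoords, coordX, bElt, tail, x_mul_x, x_mul_t, x_mul_t_mul_x, mul_sub, pow_succ,
      mul_assoc]

lemma ofCoords_single (p : ℕ × Fin 4) : ofCoords F (Finsupp.single p 1) = bElt F p := by
  simp [ofCoords]

lemma ofCoords_coordRep (b : B F) (v : Coords F) :
    ofCoords F (coordRep F b v) = b * ofCoords F v := by
  obtain ⟨a, rfl⟩ := RingQuot.mkAlgHom_surjective F (BRel F) b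
  induction a using FreeAlgebra.induction generalizing v with
  | grade0 r => simp [Algebra.algebraMap_eq_smul_one]
  | grade1 i =>
    induction v using Finsupp.induction_linear with
    | zero => simp
    | add v v' hv hv' => simp only [map_add, hv, hv', mul_add]
    | single p c =>
      obtain ⟨k, j⟩ := p
      rw [← Finsupp.smul_single_one, map_smul, map_smul, map_smul, ofCoords_single,
        mul_smul_comm]
      fin_cases i
      · change c • ofCoords F (coordRep F (t F) _) = c • (t F * _)
        rw [coordRep_t, t_mul_bElt]
      · change c • ofCoords F (coordRep F (x F) _) = c • (x F * _)
        rw [coordRep_x, x_mul_bElt]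
  | mul a a' ha ha' => simp only [map_mul, Module.End.mul_apply, ha, ha', mul_assoc]
  | add a a' ha ha' => simp only [map_add, LinearMap.add_apply, ha, ha', add_mul]

lemma ofCoords_coords (b : B F) : ofCoords F (coords F b) = b := by
  simp [coords, ofCoords_coordRep, ofCoords_single, bElt, tail]

def coordsEquiv : B F ≃ₗ[F] Coords F :=
  .ofLinearMap (coords F) (ofCoords F)
    (Finsupp.basisSingleOne.ext fun p => by simp [ofCoords_single, coords_bElt])
    (LinearMap.ext (ofCoords_coords F))

def bBasis : Module.Basis (ℕ × Fin 4) F (B F) := .ofRepr (coordsEquiv F)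

lemma coe_bBasis : ⇑(bBasis F) = bElt F := by
  ext p
  simp [bBasis, coordsEquiv, ofCoords_single]

lemma linearIndependent_w_pow : LinearIndependent F (w F ^ · : ℕ → B F) := by
  have h := (bBasis F).linearIndependent.comp (fun k => (k, 0)) (Prod.mk_left_injective 0)
  simpa [coe_bBasis, Function.comp_def, bElt, tail] using h

/-- the elements `w^k, w^k t, w^k x, w^k tx` (`k ≥ 0`) form an
`F`-basis of `B = F⟨t,x⟩/(t²,x²)`; in particular `B` is infinite-dimensional
and `w` generates a polynomial subalgebra `F[w] ⊆ B`. -/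
theorem stmt_15 :
    LinearIndependent F (bElt F) ∧
    Submodule.span F (Set.range (bElt F)) = ⊤ ∧
    ¬ Module.Finite F (B F) ∧
    Function.Injective (Polynomial.aeval (w F) : Polynomial F →ₐ[F] B F) := by
  refine ⟨coe_bBasis F ▸ (bBasis F).linearIndependent, coe_bBasis F ▸ (bBasis F).span_eq,
    fun _ => ?_, Polynomial.aeval_injective_of_linearIndependent_pow (linearIndependent_w_pow F)⟩
  have := Module.Finite.finite_basis (bBasis F)
  exact not_finite (ℕ × Fin 4)
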